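/- arXiv:1601.07384 — 3 statements merged into one kernel-verified Lean document; each statement's English description precedes it below -/
import Mathlib

section
/- Let p ≥ 1 be a natural number. If P is a real polynomial in three variables X, Y, Z of total degree at most p such that P(j₁/p, j₂/p, j₃/p) = 0 for every triple (j₁, j₂, j₃) of natural numbers with j₁ + j₂ + j₃ ≤ p, then P is the zero polynomial. (Unisolvence of the principal lattice of the reference tetrahedron for polynomials of degree p.) -/
/-!
Induct on the number of variables. Regard `P` as a polynomial of degree `r` in the first
variable; its leading coefficient `Q` is a polynomial in the remaining variables of total
degree at most `p - r`. Through each point `j'` of the lattice simplex of size `p - r` in the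
remaining variables, the line in the direction of the first variable carries `r + 1` lattice
points, at which the restriction of `P`, of degree at most `r`, vanishes; so the restriction
is zero and in particular `Q(j') = 0`. By induction `Q = 0`, hence `P = 0`.
-/

variable {R : Type*} [CommRing R] [IsDomain R] [CharZero R]

theorem Polynomial.eq_zero_of_natDegree_le_of_eval_mul_natCast_eq_zero {g : Polynomial R}
    {h : R} (hh : h ≠ 0) {r : ℕ} (hdeg : g.natDegree ≤ r)
    (hzero : ∀ k ≤ r, g.eval (h * k) = 0) : g = 0 := by
  have hinj : Function.Injective fun k : Fin (r + 1) => h * (k : ℕ) := fun a b hab =>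
    Fin.ext (Nat.cast_injective (mul_left_cancel₀ hh hab))
  refine Polynomial.eq_zero_of_natDegree_lt_card_of_eval_eq_zero g hinj
    (fun k => hzero k k.is_le) ?_
  rwa [Fintype.card_fin, Nat.lt_succ_iff]

namespace MvPolynomial

theorem eq_zero_of_totalDegree_le_of_eval_simplex_eq_zero {h : R} (hh : h ≠ 0) :
    ∀ {n d : ℕ} {P : MvPolynomial (Fin n) R}, P.totalDegree ≤ d →
      (∀ j : Fin n → ℕ, ∑ i, j i ≤ d → eval (fun i => h * j i) P = 0) → P = 0
  | 0, _, P, _, hzero => by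
    rw [P.eq_C_of_isEmpty, C_eq_zero, ← constantCoeff_eq]
    simpa using hzero 0 (by simp)
  | n + 1, d, P, hdeg, hzero => by
    set f := finSuccEquiv R n P
    by_contra hP
    have hlead : f.coeff f.natDegree ≠ 0 :=
      Polynomial.leadingCoeff_ne_zero.mpr ((finSuccEquiv R n).map_ne_zero_iff.mpr hP)
    have hdeg_lead : (f.coeff f.natDegree).totalDegree + f.natDegree ≤ P.totalDegree :=
      totalDegree_coeff_finSuccEquiv_add_le P _ hlead
    refine hlead (eq_zero_of_totalDegree_le_of_eval_simplex_eq_zero hh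
      (d := d - f.natDegree) (by omega) fun j' hj' => ?_)
    have hline : f.map (eval fun i => h * j' i) = 0 := by
      refine Polynomial.eq_zero_of_natDegree_le_of_eval_mul_natCast_eq_zero hh
        Polynomial.natDegree_map_le fun k hk => ?_
      rw [← eval_eq_eval_mv_eval']
      have hcons : (Fin.cons (h * k) fun i => h * j' i : Fin (n + 1) → R) =
          fun i => h * ((Fin.cons k j' : Fin (n + 1) → ℕ) i : R) :=
        (Fin.comp_cons (fun x : ℕ => h * x) k j').symm
      rw [hcons]
      exact hzero _ (by rw [Fin.sum_cons]; omega)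
    simpa using congrArg (Polynomial.coeff · f.natDegree) hline

end MvPolynomial

/-- Unisolvence of the principal lattice of the reference tetrahedron: a real polynomial
in three variables of total degree at most `p` vanishing at all lattice points
`(j₁/p, j₂/p, j₃/p)` with `j₁+j₂+j₃ ≤ p` is the zero polynomial. -/
theorem principal_lattice_unisolvent (p : ℕ) (hp : 1 ≤ p)
    (P : MvPolynomial (Fin 3) ℝ) (hdeg : P.totalDegree ≤ p)
    (hzero : ∀ j : Fin 3 → ℕ, (∑ i, j i) ≤ p →
      MvPolynomial.eval (fun i => (j i : ℝ) / p) P = 0) :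
    P = 0 := by
  have hp_inv : (p : ℝ)⁻¹ ≠ 0 := inv_ne_zero (Nat.cast_ne_zero.mpr (by omega))
  refine MvPolynomial.eq_zero_of_totalDegree_le_of_eval_simplex_eq_zero hp_inv hdeg fun j hj => ?_
  simpa only [inv_mul_eq_div] using hzero j hj
end

section
/- Let ν > 0, ω > 0, ρ > 0, p̃ ∈ ℝ and R > 0, and let γ ∈ ℂ satisfy γ² = −iω/ν. Suppose f: ℂ → ℂ is twice complex differentiable and satisfies Bessel's equation of order zero in the form f''(z) + f'(z)/z + f(z) = 0 for all z ≠ 0, and suppose f(γR) ≠ 0. Define the complex-valued Womersley profile u(r,t) = (p̃/(iωρ))·(1 − f(γr)/f(γR))·e^{iωt} for r ∈ (0,R] and t ∈ ℝ. Then u satisfies the unsteady axisymmetric Stokes equation driven by the oscillating pressure gradient, ∂u/∂t = ν(∂²u/∂r² + (1/r)·∂u/∂r) + (p̃/ρ)e^{iωt}, for all 0 < r ≤ R and t ∈ ℝ, and it satisfies the no-slip condition u(R,t) = 0 for all t ∈ ℝ. -/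
open Complex

/-- The complex Womersley velocity profile
`u(r,t) = (ptilde/(iωρ))·(1 − f(γr)/f(γR))·e^{iωt}`. -/
noncomputable def womersley (ptilde ω ρ : ℝ) (γ : ℂ) (f : ℂ → ℂ) (R : ℝ) (r t : ℝ) : ℂ :=
  ((ptilde : ℂ) / (Complex.I * (ω : ℂ) * (ρ : ℂ))) * (1 - f (γ * (r : ℂ)) / f (γ * (R : ℂ))) *
    Complex.exp (Complex.I * (ω : ℂ) * (t : ℂ))

/-!
Write `u = C e^{iωt} (1 - f(γr)/f(γR))` with `C = p̃/(iωρ)`. Differentiating in time multiplies `u`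
by `iω`. Rescaling Bessel's equation shows that `r ↦ f(γr)` is an eigenfunction of the radial
Laplacian `∂²ᵣ + r⁻¹ ∂ᵣ` with eigenvalue `-γ² = iω/ν`, so `ν (∂²ᵣ + r⁻¹ ∂ᵣ) u = iω (u - C e^{iωt})`,
and `iω C e^{iωt}` is exactly the forcing `(p̃/ρ) e^{iωt}`.
-/

noncomputable def radialLaplacian (u : ℝ → ℂ) (r : ℝ) : ℂ :=
  deriv (deriv u) r + (1 / (r : ℂ)) * deriv u r

theorem radialLaplacian_const_add_mul (a b : ℂ) (u : ℝ → ℂ) (r : ℝ) :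
    radialLaplacian (fun s => a + b * u s) r = b * radialLaplacian u r := by
  simp only [radialLaplacian, deriv_const_add', deriv_const_mul_field']
  ring

theorem hasDerivAt_comp_mul_ofReal {f : ℂ → ℂ} (γ : ℂ) {x : ℝ}
    (hf : DifferentiableAt ℂ f (γ * x)) :
    HasDerivAt (fun r : ℝ => f (γ * r)) (γ * deriv f (γ * x)) x := by
  have h := hf.hasDerivAt.comp (x : ℂ) ((hasDerivAt_id (x : ℂ)).const_mul γ)
  simpa [mul_comm] using h.comp_ofReal

theorem deriv_comp_mul_ofReal {f : ℂ → ℂ} (γ : ℂ) (hf : Differentiable ℂ f) :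
    deriv (fun r : ℝ => f (γ * r)) = fun r : ℝ => γ * deriv f (γ * r) :=
  funext fun _ => (hasDerivAt_comp_mul_ofReal γ (hf _)).deriv

theorem radialLaplacian_comp_mul_ofReal {f : ℂ → ℂ} (hf : Differentiable ℂ f)
    (hf' : Differentiable ℂ (deriv f))
    (hbessel : ∀ z : ℂ, z ≠ 0 → deriv (deriv f) z + deriv f z / z + f z = 0)
    (γ : ℂ) {r : ℝ} (hr : r ≠ 0) :
    radialLaplacian (fun s => f (γ * s)) r = -γ ^ 2 * f (γ * r) := by
  rcases eq_or_ne γ 0 with rfl | hγ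
  · simp [radialLaplacian]
  have hr' : (r : ℂ) ≠ 0 := by exact_mod_cast hr
  have hbessel_γr := hbessel (γ * r) (mul_ne_zero hγ hr')
  simp only [radialLaplacian, deriv_comp_mul_ofReal γ hf, deriv_const_mul_field',
    deriv_comp_mul_ofReal γ hf']
  have hscale : γ ^ 2 * (deriv f (γ * r) / (γ * r)) = 1 / r * (γ * deriv f (γ * r)) := by
    field_simp
  linear_combination γ ^ 2 * hbessel_γr - hscale

section Womersley

variable (ptilde ω ρ : ℝ) (γ : ℂ) (f : ℂ → ℂ) (R : ℝ)

theorem womersley_eq_const_add_mul (r t : ℝ) :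
    womersley ptilde ω ρ γ f R r t =
      ptilde / (I * ω * ρ) * exp (I * ω * t) +
        -(ptilde / (I * ω * ρ) * exp (I * ω * t) / f (γ * R)) * f (γ * r) := by
  unfold womersley
  ring

theorem hasDerivAt_womersley_time (r t : ℝ) :
    HasDerivAt (womersley ptilde ω ρ γ f R r) (I * ω * womersley ptilde ω ρ γ f R r t) t := by
  have hexp : HasDerivAt (fun t' : ℝ => exp (I * ω * t')) (I * ω * exp (I * ω * t)) t := by
    simpa [mul_comm] using ((hasDerivAt_id (t : ℂ)).const_mul (I * ω)).cexp.comp_ofReal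
  refine (hexp.const_mul (ptilde / (I * ω * ρ) * (1 - f (γ * r) / f (γ * R)))).congr_deriv ?_
  unfold womersley
  ring

theorem womersley_wall (t : ℝ) (hfR : f (γ * R) ≠ 0) :
    womersley ptilde ω ρ γ f R R t = 0 := by
  simp [womersley, div_self hfR]

end Womersley

theorem womersley_solves_stokes_general
    (ν ω ρ : ℝ) (hν : 0 < ν) (hω : 0 < ω) (ptilde : ℝ) (R : ℝ)
    (γ : ℂ) (hγ : γ ^ 2 = -Complex.I * (ω : ℂ) / (ν : ℂ))
    (f : ℂ → ℂ) (hf : Differentiable ℂ f) (hf' : Differentiable ℂ (deriv f))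
    (hbessel : ∀ z : ℂ, z ≠ 0 → deriv (deriv f) z + deriv f z / z + f z = 0)
    (hfR : f (γ * (R : ℂ)) ≠ 0) :
    (∀ r t : ℝ, 0 < r → r ≤ R →
      deriv (fun t' : ℝ => womersley ptilde ω ρ γ f R r t') t
        = (ν : ℂ) * (deriv (fun r' : ℝ => deriv (fun r'' : ℝ => womersley ptilde ω ρ γ f R r'' t) r') r
            + (1 / (r : ℂ)) * deriv (fun r' : ℝ => womersley ptilde ω ρ γ f R r' t) r)
          + ((ptilde : ℂ) / (ρ : ℂ)) * Complex.exp (Complex.I * (ω : ℂ) * (t : ℂ))) ∧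
    (∀ t : ℝ, womersley ptilde ω ρ γ f R R t = 0) := by
  refine ⟨fun r t hr _ => ?_, fun t => womersley_wall ptilde ω ρ γ f R t hfR⟩
  have hIω : I * (ω : ℂ) ≠ 0 := mul_ne_zero I_ne_zero (by exact_mod_cast hω.ne')
  have hνγ : (ν : ℂ) * γ ^ 2 = -(I * ω) := by
    rw [hγ]; field_simp [show (ν : ℂ) ≠ 0 by exact_mod_cast hν.ne']
  have hforcing : (ptilde : ℂ) / ρ = I * ω * (ptilde / (I * ω * ρ)) := by
    rw [mul_comm (I * (ω : ℂ)) ρ, ← div_div, mul_div_cancel₀ _ hIω]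
  have hlap : radialLaplacian (fun r' => womersley ptilde ω ρ γ f R r' t) r =
      -(ptilde / (I * ω * ρ) * exp (I * ω * t) / f (γ * R)) * (-γ ^ 2 * f (γ * r)) := by
    simp only [womersley_eq_const_add_mul ptilde ω ρ γ f R _ t]
    rw [radialLaplacian_const_add_mul, radialLaplacian_comp_mul_ofReal hf hf' hbessel γ hr.ne']
  change _ = ν * radialLaplacian (fun r' => womersley ptilde ω ρ γ f R r' t) r + _
  rw [(hasDerivAt_womersley_time ptilde ω ρ γ f R r t).deriv, hlap, hforcing,
    womersley_eq_const_add_mul]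
  linear_combination -(ptilde / (I * ω * ρ) * exp (I * ω * t) / f (γ * R)) * f (γ * r) * hνγ

/-- The Womersley profile solves the unsteady axisymmetric Stokes equation driven by an
oscillating pressure gradient, with no-slip at the tube wall `r = R`. -/
theorem womersley_solves_stokes
    (ν ω ρ : ℝ) (hν : 0 < ν) (hω : 0 < ω) (hρ : 0 < ρ) (ptilde : ℝ) (R : ℝ) (hR : 0 < R)
    (γ : ℂ) (hγ : γ ^ 2 = -Complex.I * (ω : ℂ) / (ν : ℂ))
    (f : ℂ → ℂ) (hf : Differentiable ℂ f) (hf' : Differentiable ℂ (deriv f))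
    (hbessel : ∀ z : ℂ, z ≠ 0 → deriv (deriv f) z + deriv f z / z + f z = 0)
    (hfR : f (γ * (R : ℂ)) ≠ 0) :
    (∀ r t : ℝ, 0 < r → r ≤ R →
      deriv (fun t' : ℝ => womersley ptilde ω ρ γ f R r t') t
        = (ν : ℂ) * (deriv (fun r' : ℝ => deriv (fun r'' : ℝ => womersley ptilde ω ρ γ f R r'' t) r') r
            + (1 / (r : ℂ)) * deriv (fun r' : ℝ => womersley ptilde ω ρ γ f R r' t) r)
          + ((ptilde : ℂ) / (ρ : ℂ)) * Complex.exp (Complex.I * (ω : ℂ) * (t : ℂ))) ∧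
    (∀ t : ℝ, womersley ptilde ω ρ γ f R R t = 0) :=
  womersley_solves_stokes_general ν ω ρ hν hω ptilde R γ hγ f hf hf' hbessel hfR
end

section
/- Let ν > 0, ω > 0, ρ > 0, p̃ ∈ ℝ, R > 0, let γ ∈ ℂ satisfy γ² = −iω/ν, let f: ℂ → ℂ be twice complex differentiable with f''(z) + f'(z)/z + f(z) = 0 for all z ≠ 0 and f(γR) ≠ 0, and set u(r,t) = (p̃/(iωρ))·(1 − f(γr)/f(γR))·e^{iωt}. Define on the set {(x,y,z) ∈ ℝ³ : 0 < y² + z² ≤ R²} the complex-valued three-dimensional fields V(x,y,z,t) = (u(√(y²+z²), t), 0, 0) and P(x,y,z,t) = −(p̃/ρ)·x·e^{iωt}. Then for all such (x,y,z) and all t ∈ ℝ: (i) the velocity field is divergence-free, ∂V₁/∂x + ∂V₂/∂y + ∂V₃/∂z = 0; and (ii) the unsteady Stokes momentum equations hold componentwise: ∂V₁/∂t + ∂P/∂x = ν(∂²V₁/∂x² + ∂²V₁/∂y² + ∂²V₁/∂z²), while the y- and z-momentum equations reduce to ∂P/∂y = 0 and ∂P/∂z = 0. -/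
/-!
The velocity depends on `(y, z)` only through `r = √(y² + z²)`, so its transverse Laplacian is
the radial operator `u'' + u'/r`. Writing `u = α(t) (1 - f(γr)/f(γR))` with
`α(t) = p̃/(iωρ) e^{iωt}`, Bessel's equation turns this operator applied to `f(γr)` into
`γ² (f'' + f'/w)(γr) = -γ² f(γr)`, and `νγ² = -iω` then makes `ν Δu` equal to `∂ₜu = iωu`
minus the uniform forcing `iωα = (p̃/ρ) e^{iωt}`, which is `-∂ₓP`.
-/

open Complex

/-- The axial Womersley velocity as a 3D field: the `x`-component at `(x,y,z,t)`. -/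
noncomputable def womersleyV1 (ptilde ω ρ : ℝ) (γ : ℂ) (f : ℂ → ℂ) (R : ℝ)
    (x y z t : ℝ) : ℂ :=
  womersley ptilde ω ρ γ f R (Real.sqrt (y ^ 2 + z ^ 2)) t

/-- The Womersley pressure `P(x,y,z,t) = −(p̃/ρ)·x·e^{iωt}`. -/
noncomputable def womersleyP (ptilde ρ ω : ℝ) (x y z t : ℝ) : ℂ :=
  -((ptilde : ℂ) / (ρ : ℂ)) * (x : ℂ) * Complex.exp (Complex.I * (ω : ℂ) * (t : ℂ))

section Radial

variable {E : Type*} [NormedAddCommGroup E] [NormedSpace ℝ E] {G : ℝ → E}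

theorem hasDerivAt_sqrt_sq_add_sq {a : ℝ} (b : ℝ) (h : 0 < a ^ 2 + b ^ 2) :
    HasDerivAt (fun a' => √(a' ^ 2 + b ^ 2)) (a / √(a ^ 2 + b ^ 2)) a := by
  convert ((hasDerivAt_pow 2 a).add_const (b ^ 2)).sqrt h.ne' using 1
  field_simp
  ring

theorem hasDerivAt_comp_sqrt_sq_add_sq {a b : ℝ} (hG : DifferentiableAt ℝ G √(a ^ 2 + b ^ 2))
    (h : 0 < a ^ 2 + b ^ 2) :
    HasDerivAt (fun a' => G √(a' ^ 2 + b ^ 2))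
      ((a / √(a ^ 2 + b ^ 2)) • deriv G √(a ^ 2 + b ^ 2)) a :=
  hG.hasDerivAt.scomp a (hasDerivAt_sqrt_sq_add_sq b h)

theorem deriv_deriv_comp_sqrt_sq_add_sq {a b : ℝ} (hG : ∀ s > 0, DifferentiableAt ℝ G s)
    (hG' : DifferentiableAt ℝ (deriv G) √(a ^ 2 + b ^ 2)) (h : 0 < a ^ 2 + b ^ 2) :
    deriv (fun a' => deriv (fun a'' => G √(a'' ^ 2 + b ^ 2)) a') a
      = (a / √(a ^ 2 + b ^ 2)) ^ 2 • deriv (deriv G) √(a ^ 2 + b ^ 2)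
        + (b ^ 2 / √(a ^ 2 + b ^ 2) ^ 3) • deriv G √(a ^ 2 + b ^ 2) := by
  set r := √(a ^ 2 + b ^ 2) with hr
  have hr0 : 0 < r := Real.sqrt_pos.mpr h
  have hfirst : (fun a' => deriv (fun a'' => G √(a'' ^ 2 + b ^ 2)) a')
      =ᶠ[nhds a] fun a' => (a' / √(a' ^ 2 + b ^ 2)) • deriv G √(a' ^ 2 + b ^ 2) := by
    have hopen : IsOpen {a' : ℝ | 0 < a' ^ 2 + b ^ 2} := isOpen_lt continuous_const (by fun_prop)
    filter_upwards [hopen.mem_nhds h] with a' ha'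
    exact (hasDerivAt_comp_sqrt_sq_add_sq (hG _ (Real.sqrt_pos.mpr ha')) ha').deriv
  have hcoeff : HasDerivAt (fun a' => a' / √(a' ^ 2 + b ^ 2)) (b ^ 2 / r ^ 3) a := by
    refine ((hasDerivAt_id' a).div (hasDerivAt_sqrt_sq_add_sq b h) hr0.ne').congr_deriv ?_
    have hr2 : r ^ 2 = a ^ 2 + b ^ 2 := Real.sq_sqrt h.le
    field_simp
    rw [← hr]
    linear_combination r ^ 3 * hr2
  have hprod : HasDerivAt (fun a' => (a' / √(a' ^ 2 + b ^ 2)) • deriv G √(a' ^ 2 + b ^ 2))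
      ((a / r) • (a / r) • deriv (deriv G) r + (b ^ 2 / r ^ 3) • deriv G r) a :=
    hcoeff.smul (hasDerivAt_comp_sqrt_sq_add_sq hG' h)
  rw [hfirst.deriv_eq, hprod.deriv, smul_smul, ← sq]

theorem laplacian_comp_sqrt_sq_add_sq {y z : ℝ} (hG : ∀ s > 0, DifferentiableAt ℝ G s)
    (hG' : DifferentiableAt ℝ (deriv G) √(y ^ 2 + z ^ 2)) (h : 0 < y ^ 2 + z ^ 2) :
    deriv (fun y' => deriv (fun y'' => G √(y'' ^ 2 + z ^ 2)) y') y
      + deriv (fun z' => deriv (fun z'' => G √(y ^ 2 + z'' ^ 2)) z') z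
      = deriv (deriv G) √(y ^ 2 + z ^ 2) + (√(y ^ 2 + z ^ 2))⁻¹ • deriv G √(y ^ 2 + z ^ 2) := by
  have hswap : ∀ w : ℝ, y ^ 2 + w ^ 2 = w ^ 2 + y ^ 2 := fun w => add_comm _ _
  have h' : 0 < z ^ 2 + y ^ 2 := by rwa [add_comm]
  simp only [hswap]
  rw [deriv_deriv_comp_sqrt_sq_add_sq hG hG' h,
    deriv_deriv_comp_sqrt_sq_add_sq hG (by rwa [← hswap]) h', add_comm (z ^ 2)]
  set r := √(y ^ 2 + z ^ 2)
  have hr0 : 0 < r := Real.sqrt_pos.mpr h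
  have hr2 : r ^ 2 = y ^ 2 + z ^ 2 := Real.sq_sqrt h.le
  have hcos_sin : (y / r) ^ 2 + (z / r) ^ 2 = 1 := by
    field_simp
    exact hr2.symm
  have hcurv : z ^ 2 / r ^ 3 + y ^ 2 / r ^ 3 = r⁻¹ := by
    field_simp
    linear_combination -hr2
  calc _ = ((y / r) ^ 2 + (z / r) ^ 2) • deriv (deriv G) r
        + (z ^ 2 / r ^ 3 + y ^ 2 / r ^ 3) • deriv G r := by
        simp only [add_smul]
        abel
    _ = _ := by rw [hcos_sin, hcurv, one_smul]

end Radial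

theorem hasDerivAt_comp_ofReal_mul {g : ℂ → ℂ} {c : ℂ} {s : ℝ}
    (hg : DifferentiableAt ℂ g (c * s)) :
    HasDerivAt (fun s : ℝ => g (c * s)) (c * deriv g (c * s)) s := by
  have h := hg.hasDerivAt.comp (s : ℂ) ((hasDerivAt_id (s : ℂ)).const_mul c)
  rw [mul_one, mul_comm] at h
  exact h.comp_ofReal

theorem bessel_comp_const_mul {f : ℂ → ℂ}
    (hbessel : ∀ w : ℂ, w ≠ 0 → deriv (deriv f) w + deriv f w / w + f w = 0)
    (γ : ℂ) {r : ℂ} (hr : r ≠ 0) :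
    γ * (γ * deriv (deriv f) (γ * r)) + r⁻¹ * (γ * deriv f (γ * r)) = -(γ ^ 2 * f (γ * r)) := by
  rcases eq_or_ne γ 0 with rfl | hγ
  · simp
  have h := hbessel (γ * r) (mul_ne_zero hγ hr)
  field_simp at h
  linear_combination r⁻¹ * γ * h
    - (γ ^ 2 * deriv (deriv f) (γ * r) + γ ^ 2 * f (γ * r)) * inv_mul_cancel₀ hr

noncomputable def womersleyCore (ptilde ω ρ t : ℝ) : ℂ :=
  ptilde / (I * ω * ρ) * exp (I * ω * t)

section Womersley

variable {ptilde ω ρ : ℝ} {γ : ℂ} {f : ℂ → ℂ} {R t : ℝ}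

theorem womersley_eq_womersleyCore (s : ℝ) :
    womersley ptilde ω ρ γ f R s t
      = womersleyCore ptilde ω ρ t - womersleyCore ptilde ω ρ t / f (γ * R) * f (γ * s) := by
  simp only [womersley, womersleyCore]
  ring

theorem hasDerivAt_womersley_radius {s : ℝ} (hf : DifferentiableAt ℂ f (γ * s)) :
    HasDerivAt (fun s' : ℝ => womersley ptilde ω ρ γ f R s' t)
      (-(womersleyCore ptilde ω ρ t / f (γ * R) * (γ * deriv f (γ * s)))) s := by
  simp only [womersley_eq_womersleyCore]
  exact ((hasDerivAt_comp_ofReal_mul hf).const_mul _).const_sub _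

theorem deriv_womersley_radius (hf : Differentiable ℂ f) :
    deriv (fun s : ℝ => womersley ptilde ω ρ γ f R s t)
      = fun s : ℝ => -(womersleyCore ptilde ω ρ t / f (γ * R) * (γ * deriv f (γ * s))) :=
  funext fun _ => (hasDerivAt_womersley_radius (hf _)).deriv

theorem hasDerivAt_deriv_womersley_radius {s : ℝ} (hf : Differentiable ℂ f)
    (hf' : DifferentiableAt ℂ (deriv f) (γ * s)) :
    HasDerivAt (deriv fun s' : ℝ => womersley ptilde ω ρ γ f R s' t)
      (-(womersleyCore ptilde ω ρ t / f (γ * R) * (γ * (γ * deriv (deriv f) (γ * s))))) s := by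
  rw [deriv_womersley_radius hf]
  exact (((hasDerivAt_comp_ofReal_mul hf').const_mul γ).const_mul _).neg

theorem deriv_womersley_time (r : ℝ) :
    deriv (fun t' : ℝ => womersley ptilde ω ρ γ f R r t') t
      = I * ω * womersley ptilde ω ρ γ f R r t := by
  have hexp : HasDerivAt (fun t' : ℝ => exp (I * ω * t')) (exp (I * ω * t) * (I * ω)) t := by
    simpa using ((hasDerivAt_id t).ofReal_comp.const_mul (I * (ω : ℂ))).cexp
  simp only [womersley]
  rw [(hexp.const_mul _).deriv]
  ring

theorem womersley_radial_stokes {ν r : ℝ} (hν : ν ≠ 0) (hω : ω ≠ 0)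
    (hγ : γ ^ 2 = -I * ω / ν) (hf : Differentiable ℂ f) (hf' : Differentiable ℂ (deriv f))
    (hbessel : ∀ w : ℂ, w ≠ 0 → deriv (deriv f) w + deriv f w / w + f w = 0) (hr : r ≠ 0) :
    ν * (deriv (deriv fun s : ℝ => womersley ptilde ω ρ γ f R s t) r
        + r⁻¹ • deriv (fun s : ℝ => womersley ptilde ω ρ γ f R s t) r)
      = I * ω * womersley ptilde ω ρ γ f R r t - ptilde / ρ * exp (I * ω * t) := by
  rw [(hasDerivAt_deriv_womersley_radius hf (hf' _)).deriv, deriv_womersley_radius hf,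
    real_smul, ofReal_inv]
  have hbes := bessel_comp_const_mul hbessel γ (ofReal_ne_zero.mpr hr)
  have hνγ : (ν : ℂ) * γ ^ 2 = -(I * ω) := by
    rw [hγ]
    field_simp [ofReal_ne_zero.mpr hν]
  have hcore : I * ω * womersleyCore ptilde ω ρ t = ptilde / ρ * exp (I * ω * t) := by
    have hIω : I * ω ≠ 0 := mul_ne_zero I_ne_zero (ofReal_ne_zero.mpr hω)
    rw [womersleyCore, div_mul_eq_div_div_swap, ← mul_assoc, mul_div_cancel₀ _ hIω]
  rw [womersley_eq_womersleyCore]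
  linear_combination (-(ν : ℂ) * (womersleyCore ptilde ω ρ t / f (γ * R))) * hbes
    + (womersleyCore ptilde ω ρ t / f (γ * R) * f (γ * r)) * hνγ - hcore

end Womersley

theorem deriv_womersleyP_fst (ptilde ρ ω y z t x : ℝ) :
    deriv (fun x' : ℝ => womersleyP ptilde ρ ω x' y z t) x
      = -(ptilde / ρ) * exp (I * ω * t) := by
  have h := ((hasDerivAt_id x).ofReal_comp.const_mul (-(ptilde / ρ : ℂ))).mul_const
    (exp (I * ω * t))
  simpa [womersleyP] using h.deriv

theorem womersley3d_solves_stokes_general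
    (ν ω ρ : ℝ) (hν : 0 < ν) (hω : 0 < ω) (ptilde : ℝ) (R : ℝ)
    (γ : ℂ) (hγ : γ ^ 2 = -Complex.I * (ω : ℂ) / (ν : ℂ))
    (f : ℂ → ℂ) (hf : Differentiable ℂ f) (hf' : Differentiable ℂ (deriv f))
    (hbessel : ∀ w : ℂ, w ≠ 0 → deriv (deriv f) w + deriv f w / w + f w = 0)
    (x y z t : ℝ) (hin : 0 < y ^ 2 + z ^ 2) :
    -- (i) divergence-free
    (deriv (fun x' : ℝ => womersleyV1 ptilde ω ρ γ f R x' y z t) x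
      + deriv (fun _y' : ℝ => (0 : ℂ)) y
      + deriv (fun _z' : ℝ => (0 : ℂ)) z = 0) ∧
    -- (ii) x-momentum
    (deriv (fun t' : ℝ => womersleyV1 ptilde ω ρ γ f R x y z t') t
      + deriv (fun x' : ℝ => womersleyP ptilde ρ ω x' y z t) x
      = (ν : ℂ) *
        (deriv (fun x' : ℝ => deriv (fun x'' : ℝ => womersleyV1 ptilde ω ρ γ f R x'' y z t) x') x
        + deriv (fun y' : ℝ => deriv (fun y'' : ℝ => womersleyV1 ptilde ω ρ γ f R x y'' z t) y') y
        + deriv (fun z' : ℝ => deriv (fun z'' : ℝ => womersleyV1 ptilde ω ρ γ f R x y z'' t) z') z)) ∧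
    -- y- and z-momentum reduce to the vanishing of the transverse pressure gradient
    (deriv (fun y' : ℝ => womersleyP ptilde ρ ω x y' z t) y = 0) ∧
    (deriv (fun z' : ℝ => womersleyP ptilde ρ ω x y z' t) z = 0) := by
  refine ⟨by simp [womersleyV1], ?_, by simp [womersleyP], by simp [womersleyP]⟩
  have hlap := laplacian_comp_sqrt_sq_add_sq (G := fun s : ℝ => womersley ptilde ω ρ γ f R s t)
    (fun _ _ => (hasDerivAt_womersley_radius (hf _)).differentiableAt)
    (hasDerivAt_deriv_womersley_radius hf (hf' _)).differentiableAt hin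
  simp only [womersleyV1, deriv_const, zero_add]
  rw [hlap, womersley_radial_stokes hν.ne' hω.ne' hγ hf hf' hbessel (Real.sqrt_pos.mpr hin).ne',
    deriv_womersley_time, deriv_womersleyP_fst]
  ring

/-- The 3D Womersley fields `V = (u(√(y²+z²),t),0,0)` and `P = −(p̃/ρ)x e^{iωt}` are
divergence-free and satisfy the unsteady Stokes momentum equations inside the tube. -/
theorem womersley3d_solves_stokes
    (ν ω ρ : ℝ) (hν : 0 < ν) (hω : 0 < ω) (hρ : 0 < ρ) (ptilde : ℝ) (R : ℝ) (hR : 0 < R)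
    (γ : ℂ) (hγ : γ ^ 2 = -Complex.I * (ω : ℂ) / (ν : ℂ))
    (f : ℂ → ℂ) (hf : Differentiable ℂ f) (hf' : Differentiable ℂ (deriv f))
    (hbessel : ∀ w : ℂ, w ≠ 0 → deriv (deriv f) w + deriv f w / w + f w = 0)
    (hfR : f (γ * (R : ℂ)) ≠ 0)
    (x y z t : ℝ) (hin : 0 < y ^ 2 + z ^ 2) (hout : y ^ 2 + z ^ 2 ≤ R ^ 2) :
    -- (i) divergence-free
    (deriv (fun x' : ℝ => womersleyV1 ptilde ω ρ γ f R x' y z t) x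
      + deriv (fun _y' : ℝ => (0 : ℂ)) y
      + deriv (fun _z' : ℝ => (0 : ℂ)) z = 0) ∧
    -- (ii) x-momentum
    (deriv (fun t' : ℝ => womersleyV1 ptilde ω ρ γ f R x y z t') t
      + deriv (fun x' : ℝ => womersleyP ptilde ρ ω x' y z t) x
      = (ν : ℂ) *
        (deriv (fun x' : ℝ => deriv (fun x'' : ℝ => womersleyV1 ptilde ω ρ γ f R x'' y z t) x') x
        + deriv (fun y' : ℝ => deriv (fun y'' : ℝ => womersleyV1 ptilde ω ρ γ f R x y'' z t) y') y
        + deriv (fun z' : ℝ => deriv (fun z'' : ℝ => womersleyV1 ptilde ω ρ γ f R x y z'' t) z') z)) ∧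
    -- y- and z-momentum reduce to the vanishing of the transverse pressure gradient
    (deriv (fun y' : ℝ => womersleyP ptilde ρ ω x y' z t) y = 0) ∧
    (deriv (fun z' : ℝ => womersleyP ptilde ρ ω x y z' t) z = 0) :=
  womersley3d_solves_stokes_general ν ω ρ hν hω ptilde R γ hγ f hf hf' hbessel x y z t hin
end
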